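/- If A is a theorem of JIK4 (JIK extended with axioms t:A→!t:(t:A) and μ:(ν:A)→ν:A), then the forgetful projection A° is a theorem of IK4 (IK extended with □A→□□A and ◇◇A→◇A). -/
import Mathlib


namespace JIKPaper

-- Proof terms and satisfiers for intuitionistic justification logic.
mutual
inductive PrfTm : Type
  | pvar : Nat → PrfTm
  | pconst : Nat → PrfTm
  | sum : PrfTm → PrfTm → PrfTm
  | app : PrfTm → PrfTm → PrfTm
  | upd : SatTm → PrfTm → PrfTm
  | bang : PrfTm → PrfTm
inductive SatTm : Type
  | svar : Nat → SatTm
  | uni : SatTm → SatTm → SatTm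
  | prop : PrfTm → SatTm → SatTm
end

/-- Justification formulas. -/
inductive JForm : Type
  | bot : JForm
  | atom : Nat → JForm
  | and : JForm → JForm → JForm
  | or : JForm → JForm → JForm
  | impl : JForm → JForm → JForm
  | jst : PrfTm → JForm → JForm
  | sat : SatTm → JForm → JForm

/-- Intuitionistic modal formulas. -/
inductive MForm : Type
  | bot : MForm
  | atom : Nat → MForm
  | and : MForm → MForm → MForm
  | or : MForm → MForm → MForm
  | impl : MForm → MForm → MForm
  | box : MForm → MForm
  | dia : MForm → MForm

/-- Axiom instances of the justification logics JIK (false,false), JIKt (true,false),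
JIK4 (false,true), JIS4 (true,true): intuitionistic propositional axioms, jk1–jk5,
sum axioms, and optionally the jt and j4 axioms. -/
inductive JAx : Bool → Bool → JForm → Prop
  | ax1 {hT h4 : Bool} {A B : JForm} : JAx hT h4 (A.impl (B.impl A))
  | ax2 {hT h4 : Bool} {A B C : JForm} :
      JAx hT h4 ((A.impl (B.impl C)).impl ((A.impl B).impl (A.impl C)))
  | andI {hT h4 : Bool} {A B : JForm} : JAx hT h4 (A.impl (B.impl (A.and B)))
  | andE1 {hT h4 : Bool} {A B : JForm} : JAx hT h4 ((A.and B).impl A)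
  | andE2 {hT h4 : Bool} {A B : JForm} : JAx hT h4 ((A.and B).impl B)
  | orI1 {hT h4 : Bool} {A B : JForm} : JAx hT h4 (A.impl (A.or B))
  | orI2 {hT h4 : Bool} {A B : JForm} : JAx hT h4 (B.impl (A.or B))
  | orE {hT h4 : Bool} {A B C : JForm} :
      JAx hT h4 ((A.impl C).impl ((B.impl C).impl ((A.or B).impl C)))
  | exf {hT h4 : Bool} {A : JForm} : JAx hT h4 (JForm.bot.impl A)
  | jk1 {hT h4 : Bool} {s t : PrfTm} {A B : JForm} :
      JAx hT h4 ((JForm.jst s (A.impl B)).impl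
        ((JForm.jst t A).impl (JForm.jst (PrfTm.app s t) B)))
  | jk2 {hT h4 : Bool} {s : PrfTm} {μ : SatTm} {A B : JForm} :
      JAx hT h4 ((JForm.jst s (A.impl B)).impl
        ((JForm.sat μ A).impl (JForm.sat (SatTm.prop s μ) B)))
  | jk3 {hT h4 : Bool} {μ : SatTm} {A B : JForm} :
      JAx hT h4 ((JForm.sat μ (A.or B)).impl ((JForm.sat μ A).or (JForm.sat μ B)))
  | jk4 {hT h4 : Bool} {μ : SatTm} {t : PrfTm} {A B : JForm} :
      JAx hT h4 (((JForm.sat μ A).impl (JForm.jst t B)).impl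
        (JForm.jst (PrfTm.upd μ t) (A.impl B)))
  | jk5 {hT h4 : Bool} {μ : SatTm} :
      JAx hT h4 ((JForm.sat μ JForm.bot).impl JForm.bot)
  | sum1 {hT h4 : Bool} {s t : PrfTm} {A : JForm} :
      JAx hT h4 ((JForm.jst s A).impl (JForm.jst (PrfTm.sum s t) A))
  | sum2 {hT h4 : Bool} {s t : PrfTm} {A : JForm} :
      JAx hT h4 ((JForm.jst t A).impl (JForm.jst (PrfTm.sum s t) A))
  | uni1 {hT h4 : Bool} {μ ν : SatTm} {A : JForm} :
      JAx hT h4 ((JForm.sat μ A).impl (JForm.sat (SatTm.uni μ ν) A))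
  | uni2 {hT h4 : Bool} {μ ν : SatTm} {A : JForm} :
      JAx hT h4 ((JForm.sat ν A).impl (JForm.sat (SatTm.uni μ ν) A))
  | jtBox {h4 : Bool} {t : PrfTm} {A : JForm} : JAx true h4 ((JForm.jst t A).impl A)
  | jtDia {h4 : Bool} {μ : SatTm} {A : JForm} : JAx true h4 (A.impl (JForm.sat μ A))
  | j4Box {hT : Bool} {t : PrfTm} {A : JForm} :
      JAx hT true ((JForm.jst t A).impl (JForm.jst (PrfTm.bang t) (JForm.jst t A)))
  | j4Dia {hT : Bool} {μ ν : SatTm} {A : JForm} :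
      JAx hT true ((JForm.sat μ (JForm.sat ν A)).impl (JForm.sat ν A))

/-- `cₙ:⋯:c₁:A` for a list of constants. -/
def canChain (cs : List Nat) (A : JForm) : JForm :=
  cs.foldr (fun c B => JForm.jst (PrfTm.pconst c) B) A

/-- Theorems of the justification logic: closure of the axioms under modus ponens and
the constant axiom necessitation rule (with the empty chain giving the axioms). -/
inductive JThm (hT h4 : Bool) : JForm → Prop
  | can {A : JForm} (cs : List Nat) : JAx hT h4 A → JThm hT h4 (canChain cs A)
  | mp {A B : JForm} : JThm hT h4 (A.impl B) → JThm hT h4 A → JThm hT h4 B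

/-- Axiom instances of IK (false,false), IKt (true,false), IK4 (false,true), IS4 (true,true). -/
inductive MAx : Bool → Bool → MForm → Prop
  | ax1 {hT h4 : Bool} {A B : MForm} : MAx hT h4 (A.impl (B.impl A))
  | ax2 {hT h4 : Bool} {A B C : MForm} :
      MAx hT h4 ((A.impl (B.impl C)).impl ((A.impl B).impl (A.impl C)))
  | andI {hT h4 : Bool} {A B : MForm} : MAx hT h4 (A.impl (B.impl (A.and B)))
  | andE1 {hT h4 : Bool} {A B : MForm} : MAx hT h4 ((A.and B).impl A)
  | andE2 {hT h4 : Bool} {A B : MForm} : MAx hT h4 ((A.and B).impl B)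
  | orI1 {hT h4 : Bool} {A B : MForm} : MAx hT h4 (A.impl (A.or B))
  | orI2 {hT h4 : Bool} {A B : MForm} : MAx hT h4 (B.impl (A.or B))
  | orE {hT h4 : Bool} {A B C : MForm} :
      MAx hT h4 ((A.impl C).impl ((B.impl C).impl ((A.or B).impl C)))
  | exf {hT h4 : Bool} {A : MForm} : MAx hT h4 (MForm.bot.impl A)
  | k1 {hT h4 : Bool} {A B : MForm} :
      MAx hT h4 ((A.impl B).box.impl (A.box.impl B.box))
  | k2 {hT h4 : Bool} {A B : MForm} :
      MAx hT h4 ((A.impl B).box.impl (A.dia.impl B.dia))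
  | k3 {hT h4 : Bool} {A B : MForm} :
      MAx hT h4 ((A.or B).dia.impl (A.dia.or B.dia))
  | k4 {hT h4 : Bool} {A B : MForm} :
      MAx hT h4 ((A.dia.impl B.box).impl (A.impl B).box)
  | k5 {hT h4 : Bool} : MAx hT h4 (MForm.bot.dia.impl MForm.bot)
  | tBox {h4 : Bool} {A : MForm} : MAx true h4 (A.box.impl A)
  | tDia {h4 : Bool} {A : MForm} : MAx true h4 (A.impl A.dia)
  | fourBox {hT : Bool} {A : MForm} : MAx hT true (A.box.impl A.box.box)
  | fourDia {hT : Bool} {A : MForm} : MAx hT true (A.dia.dia.impl A.dia)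

/-- Theorems of the intuitionistic modal logic: modus ponens and necessitation. -/
inductive MThm (hT h4 : Bool) : MForm → Prop
  | ax {A : MForm} : MAx hT h4 A → MThm hT h4 A
  | mp {A B : MForm} : MThm hT h4 (A.impl B) → MThm hT h4 A → MThm hT h4 B
  | nec {A : MForm} : MThm hT h4 A → MThm hT h4 A.box

/-- The forgetful projection from justification formulas to modal formulas. -/
def forget : JForm → MForm
  | .bot => .bot
  | .atom n => .atom n
  | .and A B => .and (forget A) (forget B)
  | .or A B => .or (forget A) (forget B)
  | .impl A B => .impl (forget A) (forget B)
  | .jst _ A => .box (forget A)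
  | .sat _ A => .dia (forget A)


lemma mimp_id {hT h4 : Bool} (A : MForm) : MThm hT h4 (A.impl A) :=
  MThm.mp (MThm.mp (MThm.ax (MAx.ax2 (A := A) (B := A.impl A) (C := A)))
    (MThm.ax MAx.ax1)) (MThm.ax (MAx.ax1 (B := A)))

lemma forget_ax {A : JForm} (h : JAx false true A) : MThm false true (forget A) := by
  cases h <;> simp only [forget] <;>
    first
      | exact mimp_id _
      | exact MThm.ax MAx.ax1
      | exact MThm.ax MAx.ax2
      | exact MThm.ax MAx.andI
      | exact MThm.ax MAx.andE1
      | exact MThm.ax MAx.andE2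
      | exact MThm.ax MAx.orI1
      | exact MThm.ax MAx.orI2
      | exact MThm.ax MAx.orE
      | exact MThm.ax MAx.exf
      | exact MThm.ax MAx.k1
      | exact MThm.ax MAx.k2
      | exact MThm.ax MAx.k3
      | exact MThm.ax MAx.k4
      | exact MThm.ax MAx.k5
      | exact MThm.ax MAx.fourBox
      | exact MThm.ax MAx.fourDia

lemma forget_canChain (cs : List Nat) {A : JForm} (h : MThm false true (forget A)) :
    MThm false true (forget (canChain cs A)) := by
  induction cs with
  | nil => exact h
  | cons c cs ih => exact MThm.nec ih

/-- If A is a theorem of JIK4 then A° is a theorem of IK4. -/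
theorem forgetful_projection_JIK4_IK4 (A : JForm) (h : JThm false true A) :
    MThm false true (forget A) := by
  induction h with
  | can cs hax => exact forget_canChain cs (forget_ax hax)
  | mp _ _ ih1 ih2 => exact MThm.mp ih1 ih2

end JIKPaper
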